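/- arXiv:1104.5360 — 5 statements merged into one kernel-verified Lean document; each statement's English description precedes it below -/
import Mathlib

section
/- Let f and h be functions holomorphic on a neighborhood of a closed disk B in the complex plane. Suppose that for every real t in [a, b], the function f(z) + t·h(z) has no zeros on the boundary circle of B. Then the number of zeros (counted with multiplicity) of f(z) + t·h(z) inside B is the same for all t in [a, b]. -/
open Metric Classical

/-- The number of zeros of `f`, counted with multiplicity (via the order of
vanishing of the analytic function), in the set `s`. -/
noncomputable def zeroCount (f : ℂ → ℂ) (s : Set ℂ) : ℕ :=
  ∑ᶠ z ∈ s, if h : AnalyticAt ℂ f z then (analyticOrderAt f z).toNat else 0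

/-!
By the argument principle, `(2πi)⁻¹ ∮ (f + t h)' / (f + t h)` is the number of zeros of `f + t h`
in the disk. The argument principle itself follows by induction on that number: at a zero `z₀`,
`g = (z - z₀) · dslope g z₀`, which removes one zero and adds `∮ (z - z₀)⁻¹ = 2πi` to the integral.
Since `f + t h` has no zeros on the circle, the integrand is jointly continuous in `(t, z)`, so the
count is a continuous integer-valued function of `t` on the connected interval `[a, b]`, hence
constant.
-/

open Complex Set Filter Topology Real

theorem zeroCount_eq_finsum_analyticOrderNatAt {f : ℂ → ℂ} {s : Set ℂ}
    (hf : AnalyticOnNhd ℂ f s) :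
    zeroCount f s = ∑ᶠ z ∈ s, analyticOrderNatAt f z :=
  finsum_mem_congr rfl fun z hz => dif_pos (hf z hz)

theorem zeroCount_eq_zero_of_forall_ne_zero {f : ℂ → ℂ} {s : Set ℂ} (hf : AnalyticOnNhd ℂ f s)
    (h : ∀ z ∈ s, f z ≠ 0) : zeroCount f s = 0 := by
  rw [zeroCount_eq_finsum_analyticOrderNatAt hf]
  exact finsum_mem_eq_zero_of_forall_eq_zero fun z hz => by
    simp [analyticOrderNatAt, (hf z hz).analyticOrderAt_eq_zero.2 (h z hz)]

theorem analyticOrderAt_ne_top_of_finite_zeros {f : ℂ → ℂ} {s : Set ℂ} {z : ℂ} (hs : IsOpen s)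
    (hfin : (s ∩ f ⁻¹' {0}).Finite) (hz : z ∈ s) : analyticOrderAt f z ≠ ⊤ := fun htop =>
  infinite_of_mem_nhds z (inter_mem (hs.mem_nhds hz) (analyticOrderAt_eq_top.1 htop)) hfin

theorem finite_inter_support_analyticOrderNatAt {f : ℂ → ℂ} {s : Set ℂ}
    (hfin : (s ∩ f ⁻¹' {0}).Finite) : (s ∩ Function.support (analyticOrderNatAt f)).Finite :=
  hfin.subset fun _ ⟨hz, hne⟩ => ⟨hz, apply_eq_zero_of_analyticOrderNatAt_ne_zero hne⟩

/- Junk values: `finsum` over an infinite support is `0`, and `analyticOrderNatAt` sends the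
order `⊤` of a function vanishing near a point to `0`. -/
theorem zeroCount_mul {f g : ℂ → ℂ} {s : Set ℂ} (hs : IsOpen s) (hf : AnalyticOnNhd ℂ f s)
    (hg : AnalyticOnNhd ℂ g s) (hf₀ : (s ∩ f ⁻¹' {0}).Finite) (hg₀ : (s ∩ g ⁻¹' {0}).Finite) :
    zeroCount (fun z => f z * g z) s = zeroCount f s + zeroCount g s := by
  rw [zeroCount_eq_finsum_analyticOrderNatAt (hf.mul hg),
    zeroCount_eq_finsum_analyticOrderNatAt hf, zeroCount_eq_finsum_analyticOrderNatAt hg,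
    ← finsum_mem_add_distrib' (finite_inter_support_analyticOrderNatAt hf₀)
      (finite_inter_support_analyticOrderNatAt hg₀)]
  exact finsum_mem_congr rfl fun z hz => analyticOrderNatAt_mul (hf z hz) (hg z hz)
    (analyticOrderAt_ne_top_of_finite_zeros hs hf₀ hz)
    (analyticOrderAt_ne_top_of_finite_zeros hs hg₀ hz)

theorem zeroCount_id_sub_const {s : Set ℂ} {z₀ : ℂ} (hz₀ : z₀ ∈ s) :
    zeroCount (· - z₀) s = 1 := by
  have hord : ∀ z, analyticOrderNatAt (· - z₀) z = if z = z₀ then 1 else 0 := fun z => by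
    split_ifs with h
    · simp [analyticOrderNatAt, h]
    · simp [analyticOrderNatAt, analyticOrderAt_id_sub_const_of_ne h]
  have hsupp : s ∩ Function.support (fun z => if z = z₀ then 1 else 0) = {z₀} := by
    ext z
    by_cases h : z = z₀ <;> simp [h, hz₀]
  rw [zeroCount_eq_finsum_analyticOrderNatAt (f := (· - z₀)) fun z _ => by fun_prop,
    finsum_mem_congr rfl fun z _ => hord z, ← finsum_mem_inter_support, hsupp,
    finsum_mem_singleton, if_pos rfl]

theorem AnalyticOnNhd.finite_inter_preimage_zero {f : ℂ → ℂ} {K : Set ℂ} {x : ℂ}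
    (hK : IsCompact K) (hK' : IsConnected K) (hf : AnalyticOnNhd ℂ f K) (hx : x ∈ K)
    (hfx : f x ≠ 0) : (K ∩ f ⁻¹' {0}).Finite := by
  simpa [sdiff_compl] using hK.finite_sdiff_of_mem_codiscreteWithin
    (hf.preimage_zero_mem_codiscreteWithin hfx hx hK')

theorem AnalyticOnNhd.dslope {E : Type*} [NormedAddCommGroup E] [NormedSpace ℂ E]
    [CompleteSpace E] {f : ℂ → E} {s : Set ℂ} {c : ℂ} (hf : AnalyticOnNhd ℂ f s) (hc : c ∈ s) :
    AnalyticOnNhd ℂ (_root_.dslope f c) s := by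
  have hV : IsOpen {z | AnalyticAt ℂ f z} := isOpen_analyticAt ℂ f
  have hdiff : DifferentiableOn ℂ (_root_.dslope f c) {z | AnalyticAt ℂ f z} :=
    (Complex.differentiableOn_dslope (hV.mem_nhds (hf c hc))).2
      fun _ hz => hz.differentiableWithinAt
  exact ((Complex.analyticOnNhd_iff_differentiableOn hV).2 hdiff).mono fun z hz => hf z hz

theorem AnalyticOnNhd.logDeriv {f : ℂ → ℂ} {s : Set ℂ} (hf : AnalyticOnNhd ℂ f s)
    (h : ∀ z ∈ s, f z ≠ 0) : AnalyticOnNhd ℂ (logDeriv f) s := by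
  rw [show _root_.logDeriv f = fun z => deriv f z / f z from funext (logDeriv_apply f)]
  exact hf.deriv.div hf h

theorem circleIntegral_logDeriv_eq_zero {g : ℂ → ℂ} {c : ℂ} {R : ℝ} (hR : 0 ≤ R)
    (hg : AnalyticOnNhd ℂ g (closedBall c R)) (h : ∀ z ∈ closedBall c R, g z ≠ 0) :
    ∮ z in C(c, R), logDeriv g z = 0 :=
  have hlog := hg.logDeriv h
  circleIntegral_eq_zero_of_differentiable_on_off_countable hR countable_empty hlog.continuousOn
    fun z hz => (hlog z (ball_subset_closedBall hz.1)).differentiableAt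

theorem circleIntegral_logDeriv_sub_mul {g : ℂ → ℂ} {c z₀ : ℂ} {R : ℝ} (hz₀ : z₀ ∈ ball c R)
    (hg : AnalyticOnNhd ℂ g (sphere c R)) (h : ∀ z ∈ sphere c R, g z ≠ 0) :
    ∮ z in C(c, R), logDeriv (fun z => (z - z₀) * g z) z =
      2 * π * I + ∮ z in C(c, R), logDeriv g z := by
  have hR : 0 ≤ R := dist_nonneg.trans (mem_ball.1 hz₀).le
  have hsub : ∀ z ∈ sphere c R, z - z₀ ≠ 0 := fun z hz =>
    sub_ne_zero.2 fun hzz => (mem_ball.1 hz₀).ne (hzz ▸ mem_sphere.1 hz)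
  have hsplit : EqOn (logDeriv fun z => (z - z₀) * g z) (fun z => (z - z₀)⁻¹ + logDeriv g z)
      (sphere c R) := fun z hz => by
    rw [logDeriv_mul z (hsub z hz) (h z hz) (by fun_prop) (hg z hz).differentiableAt]
    simp [logDeriv_apply]
  have hint : CircleIntegrable (fun z => (z - z₀)⁻¹) c R :=
    (continuousOn_id.sub continuousOn_const).inv₀ hsub |>.circleIntegrable hR
  rw [circleIntegral.integral_congr hR hsplit,
    circleIntegral.integral_add hint ((hg.logDeriv h).continuousOn.circleIntegrable hR),
    circleIntegral.integral_sub_inv_of_mem_ball hz₀]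

theorem circleIntegral_logDeriv_eq_two_pi_I_mul_zeroCount {g : ℂ → ℂ} {c : ℂ} {R : ℝ}
    (hR : 0 < R) (hg : AnalyticOnNhd ℂ g (closedBall c R)) (hs : ∀ z ∈ sphere c R, g z ≠ 0) :
    ∮ z in C(c, R), logDeriv g z = 2 * π * I * zeroCount g (ball c R) := by
  induction hn : zeroCount g (ball c R) using Nat.strong_induction_on generalizing g with
  | _ n ih =>
  by_cases hzero : ∃ z₀ ∈ ball c R, g z₀ = 0
  · obtain ⟨z₀, hz₀, hgz₀⟩ := hzero
    set g₁ := dslope g z₀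
    have hfac : g = fun z => (z - z₀) * g₁ z := funext fun z => by
      simpa [hgz₀] using (sub_smul_dslope g z₀ z).symm
    have hg₁ : AnalyticOnNhd ℂ g₁ (closedBall c R) := hg.dslope (ball_subset_closedBall hz₀)
    have hs₁ : ∀ z ∈ sphere c R, g₁ z ≠ 0 := fun z hz h0 => hs z hz (by rw [hfac]; simp [h0])
    obtain ⟨w, hw⟩ : (sphere c R).Nonempty := NormedSpace.sphere_nonempty.2 hR.le
    have hfin₁ : (ball c R ∩ g₁ ⁻¹' {0}).Finite :=
      (hg₁.finite_inter_preimage_zero (isCompact_closedBall c R) (isConnected_closedBall hR.le)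
        (sphere_subset_closedBall hw) (hs₁ w hw)).subset
        (inter_subset_inter_left _ ball_subset_closedBall)
    have hcount : n = zeroCount g₁ (ball c R) + 1 := by
      rw [← hn, hfac, zeroCount_mul isOpen_ball (fun z _ => by fun_prop)
        (hg₁.mono ball_subset_closedBall)
        ((finite_singleton z₀).subset fun z hz => sub_eq_zero.1 hz.2) hfin₁,
        zeroCount_id_sub_const hz₀, add_comm]
    rw [hfac, circleIntegral_logDeriv_sub_mul hz₀ (hg₁.mono sphere_subset_closedBall) hs₁,
      ih _ (by omega) hg₁ hs₁ rfl, hcount]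
    push_cast
    ring
  · push Not at hzero
    have hne : ∀ z ∈ closedBall c R, g z ≠ 0 := by
      rw [← ball_union_sphere]
      rintro z (hz | hz)
      exacts [hzero z hz, hs z hz]
    rw [← hn, zeroCount_eq_zero_of_forall_ne_zero (hg.mono ball_subset_closedBall) hzero,
      circleIntegral_logDeriv_eq_zero hR.le hg hne]
    simp

theorem continuousOn_parametric_circleIntegral {X E : Type*} [TopologicalSpace X]
    [NormedAddCommGroup E] [NormedSpace ℂ E] {F : X → ℂ → E} {K : Set X} {c : ℂ} {R : ℝ}
    (hR : 0 ≤ R) (hF : ContinuousOn (Function.uncurry F) (K ×ˢ sphere c R)) :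
    ContinuousOn (fun x => ∮ z in C(c, R), F x z) K := by
  rw [continuousOn_iff_continuous_domRestrict]
  have hcirc : Continuous fun p : K × ℝ => F p.1 (circleMap c R p.2) :=
    hF.comp_continuous (f := fun p : K × ℝ => ((p.1 : X), circleMap c R p.2)) (by fun_prop)
      fun p => ⟨p.1.2, circleMap_mem_sphere c hR p.2⟩
  have hderiv : Continuous fun p : K × ℝ => deriv (circleMap c R) p.2 := by
    simp only [deriv_circleMap]
    fun_prop
  exact intervalIntegral.continuous_parametric_intervalIntegral_of_continuous' (hderiv.smul hcirc)
    0 (2 * π)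

theorem continuousOn_circleIntegral_logDeriv_add_mul {f h : ℂ → ℂ} {U : Set ℂ} {c : ℂ} {R : ℝ}
    {K : Set ℂ} (hR : 0 ≤ R) (hU : IsOpen U) (hf : DifferentiableOn ℂ f U)
    (hh : DifferentiableOn ℂ h U) (hsU : sphere c R ⊆ U)
    (hne : ∀ t ∈ K, ∀ z ∈ sphere c R, f z + t * h z ≠ 0) :
    ContinuousOn (fun t => ∮ z in C(c, R), logDeriv (fun z => f z + t * h z) z) K := by
  have hf' := (hf.analyticOnNhd hU).deriv.continuousOn
  have hh' := (hh.analyticOnNhd hU).deriv.continuousOn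
  have hsnd : MapsTo Prod.snd (K ×ˢ sphere c R) U := fun p hp => hsU hp.2
  have hcomp {φ : ℂ → ℂ} (hφ : ContinuousOn φ U) :
      ContinuousOn (fun p : ℂ × ℂ => φ p.2) (K ×ˢ sphere c R) :=
    hφ.comp continuousOn_snd hsnd
  refine continuousOn_parametric_circleIntegral hR (ContinuousOn.congr (f := fun p : ℂ × ℂ =>
    (deriv f p.2 + p.1 * deriv h p.2) / (f p.2 + p.1 * h p.2)) ?_ fun p hp => ?_)
  · exact ((hcomp hf').add (continuousOn_fst.mul (hcomp hh'))).div
      ((hcomp hf.continuousOn).add (continuousOn_fst.mul (hcomp hh.continuousOn)))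
      fun p hp => hne p.1 hp.1 p.2 hp.2
  · obtain ⟨t, z⟩ := p
    have hfz := hf.differentiableAt (hU.mem_nhds (hsU hp.2))
    have hhz := hh.differentiableAt (hU.mem_nhds (hsU hp.2))
    rw [Function.uncurry_apply_pair, logDeriv_apply, deriv_fun_add hfz (hhz.const_mul t),
      deriv_const_mul t hhz]

theorem IsPreconnected.eq_of_continuousOn_natCast {X : Type*} [TopologicalSpace X] {s : Set X}
    (hs : IsPreconnected s) {N : X → ℕ} (hN : ContinuousOn (fun x => (N x : ℂ)) s) {x y : X}
    (hx : x ∈ s) (hy : y ∈ s) : N x = N y := by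
  have hcast : IsInducing (Nat.cast : ℕ → ℂ) := by
    convert (isometry_ofReal.isEmbedding.comp Nat.isClosedEmbedding_coe_real.isEmbedding).isInducing
    ext n
    simp
  exact hs.constant (hcast.continuousOn_iff.2 hN) hx hy

theorem ostrowski_general (f h : ℂ → ℂ) (c : ℂ) (ρ : ℝ) (hρ : 0 < ρ)
    (U : Set ℂ) (hU : IsOpen U) (hBU : Metric.closedBall c ρ ⊆ U)
    (hf : DifferentiableOn ℂ f U) (hh : DifferentiableOn ℂ h U)
    (a b : ℝ)
    (hne : ∀ t ∈ Set.Icc a b, ∀ z ∈ Metric.sphere c ρ, f z + (t : ℂ) * h z ≠ 0) :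
    ∀ t₁ ∈ Set.Icc a b, ∀ t₂ ∈ Set.Icc a b,
      zeroCount (fun z => f z + (t₁ : ℂ) * h z) (Metric.ball c ρ) =
      zeroCount (fun z => f z + (t₂ : ℂ) * h z) (Metric.ball c ρ) := by
  have hcount : ∀ t ∈ Icc a b, (zeroCount (fun z => f z + (t : ℂ) * h z) (ball c ρ) : ℂ) =
      (2 * π * I)⁻¹ * ∮ z in C(c, ρ), logDeriv (fun z => f z + (t : ℂ) * h z) z := fun t ht => by
    have hg : AnalyticOnNhd ℂ (fun z => f z + (t : ℂ) * h z) U :=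
      (hf.add (hh.const_mul _)).analyticOnNhd hU
    rw [circleIntegral_logDeriv_eq_two_pi_I_mul_zeroCount hρ (hg.mono hBU) (hne t ht),
      inv_mul_cancel_left₀ two_pi_I_ne_zero]
  have hcont : ContinuousOn
      (fun t : ℝ => ∮ z in C(c, ρ), logDeriv (fun z => f z + (t : ℂ) * h z) z) (Icc a b) :=
    (continuousOn_circleIntegral_logDeriv_add_mul (K := ofReal '' Icc a b) hρ.le hU hf hh
      (sphere_subset_closedBall.trans hBU) (by rintro _ ⟨t, ht, rfl⟩; exact hne t ht)).comp
      continuous_ofReal.continuousOn (mapsTo_image _ _)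
  intro t₁ ht₁ t₂ ht₂
  exact isPreconnected_Icc.eq_of_continuousOn_natCast
    ((continuousOn_const.mul hcont).congr hcount) ht₁ ht₂

/-- Ostrowski's lemma: if `f + t·h` is zero-free on the boundary circle of a closed
disk for every `t ∈ [a, b]`, then the number of its zeros inside the disk, counted
with multiplicity, does not depend on `t ∈ [a, b]`. -/
theorem ostrowski (f h : ℂ → ℂ) (c : ℂ) (ρ : ℝ) (hρ : 0 < ρ)
    (U : Set ℂ) (hU : IsOpen U) (hBU : Metric.closedBall c ρ ⊆ U)
    (hf : DifferentiableOn ℂ f U) (hh : DifferentiableOn ℂ h U)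
    (a b : ℝ) (hab : a < b)
    (hne : ∀ t ∈ Set.Icc a b, ∀ z ∈ Metric.sphere c ρ, f z + (t : ℂ) * h z ≠ 0) :
    ∀ t₁ ∈ Set.Icc a b, ∀ t₂ ∈ Set.Icc a b,
      zeroCount (fun z => f z + (t₁ : ℂ) * h z) (Metric.ball c ρ) =
      zeroCount (fun z => f z + (t₂ : ℂ) * h z) (Metric.ball c ρ) :=
  ostrowski_general f h c ρ hρ U hU hBU hf hh a b hne
end

section
/- Under the hypotheses of the previous setup (monic g of degree n, 1 ≤ k ≤ n-1, A_k = Σ_{j≠k} |a_j| ≤ (1 - ε/n)(ε/(n+ε))^{n-k} |a_k|^{1/(n-k)}), every positive root R of the polynomial x^n - |a_k| x^k + Σ_{j≠k,n} |a_j| x^j that exceeds 1 satisfies (1 - ε/n)|a_k|^{1/(n-k)} ≤ R ≤ |a_k|^{1/(n-k)}. -/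
/-!
Write `B = ‖a k‖`, `c = B ^ (1 / (n - k))`, `A = A_k` and `S` for the sum over `j ≠ k, n`, so that
the root satisfies `R ^ n + S = B R ^ k` with `0 ≤ S ≤ A R ^ (n - 1)` (as `R > 1`). Dropping `S`
gives `R ^ (n - k) ≤ B = c ^ (n - k)`, i.e. `R ≤ c`. Bounding `S` instead gives
`c ^ (n - k) ≤ R ^ (n - k - 1) (R + A) ≤ c ^ (n - k - 1) (R + A)`, hence `c ≤ R + A`; since
`ε / (n + ε) ≤ ε / n`, the hypothesis on `A` makes `A ≤ (ε / n) c`, so `(1 - ε / n) c ≤ R`.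
-/

open Finset

theorem sum_mul_pow_le_sum_mul_pow {s : Finset ℕ} {w : ℕ → ℝ} {R : ℝ} {N : ℕ} (hR : 1 ≤ R)
    (hw : ∀ j ∈ s, 0 ≤ w j) (hs : ∀ j ∈ s, j ≤ N) :
    ∑ j ∈ s, w j * R ^ j ≤ (∑ j ∈ s, w j) * R ^ N := by
  rw [sum_mul]
  exact sum_le_sum fun j hj => mul_le_mul_of_nonneg_left (pow_le_pow_right₀ hR (hs j hj)) (hw j hj)

section RootOfCauchyPolynomial

variable {R S A B : ℝ} {k m : ℕ}

theorem pow_le_of_pow_add_add_eq (hR : 0 < R) (hS : 0 ≤ S) (h : R ^ (k + m) + S = B * R ^ k) :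
    R ^ m ≤ B := by
  refine le_of_mul_le_mul_right ?_ (pow_pos hR k)
  rw [← pow_add, add_comm]
  linarith

theorem le_pow_mul_add_of_pow_add_add_eq (hR : 0 < R) (hS : S ≤ A * R ^ (k + m))
    (h : R ^ (k + m + 1) + S = B * R ^ k) : B ≤ R ^ m * (R + A) := by
  refine le_of_mul_le_mul_right ?_ (pow_pos hR k)
  calc B * R ^ k = R ^ (k + m + 1) + S := h.symm
    _ ≤ R ^ (k + m) * (R + A) := by rw [pow_succ]; linarith
    _ = R ^ m * (R + A) * R ^ k := by rw [pow_add]; ring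

end RootOfCauchyPolynomial

theorem le_add_of_pow_succ_le_pow_mul_add {R A c : ℝ} {m : ℕ} (hR : 0 ≤ R) (hA : 0 ≤ A)
    (hRc : R ≤ c) (h : c ^ (m + 1) ≤ R ^ m * (R + A)) : c ≤ R + A := by
  by_contra! hlt
  have hc : 0 < c := by linarith
  have : R ^ m * (R + A) < c ^ (m + 1) :=
    calc R ^ m * (R + A) ≤ c ^ m * (R + A) := by gcongr
      _ < c ^ m * c := by gcongr
      _ = c ^ (m + 1) := (pow_succ c m).symm
  linarith

theorem one_sub_mul_pow_le {t u : ℝ} {m : ℕ} (hu0 : 0 ≤ u) (hu1 : u ≤ 1) (hut : u ≤ t)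
    (hm : m ≠ 0) : (1 - t) * u ^ m ≤ t := by
  have hum : u ^ m ≤ u := pow_le_of_le_one hu0 hu1 hm
  have htum : 0 ≤ t * u ^ m := mul_nonneg (hu0.trans hut) (pow_nonneg hu0 m)
  linarith [show (1 - t) * u ^ m = u ^ m - t * u ^ m by ring]

theorem stmt4_general (n k : ℕ) (hn : 2 ≤ n) (hk2 : k ≤ n - 1)
    (a : ℕ → ℂ)
    (ε : ℝ) (hε : 0 < ε)
    (hA : ∑ j ∈ (Finset.range (n + 1)).erase k, ‖a j‖ ≤
      (1 - ε / n) * (ε / (n + ε)) ^ (n - k) *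
        (‖a k‖) ^ ((1 : ℝ) / ((n : ℝ) - k)))
    (R : ℝ) (hR : 1 < R)
    (hroot : R ^ n - ‖a k‖ * R ^ k
      + ∑ j ∈ (Finset.range n).erase k, ‖a j‖ * R ^ j = 0) :
    (1 - ε / n) * (‖a k‖) ^ ((1 : ℝ) / ((n : ℝ) - k)) ≤ R ∧
      R ≤ (‖a k‖) ^ ((1 : ℝ) / ((n : ℝ) - k)) := by
  obtain ⟨m, hnk⟩ : ∃ m, n - k = m + 1 := ⟨n - k - 1, by omega⟩
  have hcast : (n : ℝ) - k = ((m + 1 : ℕ) : ℝ) := by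
    rw [← hnk, Nat.cast_sub (by omega)]
  rw [hnk] at hA
  rw [hcast, one_div] at hA ⊢
  set B := ‖a k‖
  set c := B ^ (((m + 1 : ℕ) : ℝ)⁻¹)
  set A := ∑ j ∈ (range (n + 1)).erase k, ‖a j‖
  set S := ∑ j ∈ (range n).erase k, ‖a j‖ * R ^ j
  have hR0 : 0 < R := by linarith
  have hc0 : 0 ≤ c := by positivity
  have hcB : c ^ (m + 1) = B := Real.rpow_inv_natCast_pow (norm_nonneg _) m.succ_ne_zero
  have hS0 : 0 ≤ S := sum_nonneg fun j _ => by positivity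
  have hSA : S ≤ A * R ^ (k + m) :=
    calc S ≤ (∑ j ∈ (range n).erase k, ‖a j‖) * R ^ (k + m) :=
          sum_mul_pow_le_sum_mul_pow hR.le (fun _ _ => norm_nonneg _) fun j hj => by
            have := mem_range.mp (mem_of_mem_erase hj); omega
      _ ≤ A * R ^ (k + m) := by
          gcongr
          exact sum_le_sum_of_subset_of_nonneg (erase_subset_erase _ (range_subset_range.mpr
            (Nat.le_succ n))) fun _ _ _ => norm_nonneg _
  have heq : R ^ (k + m + 1) + S = B * R ^ k := by
    rw [show k + m + 1 = n by omega]; linarith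
  have hRc : R ≤ c := by
    rw [← pow_le_pow_iff_left₀ hR0.le hc0 m.succ_ne_zero, hcB]
    exact pow_le_of_pow_add_add_eq hR0 hS0 heq
  have hcRA : c ≤ R + A := le_add_of_pow_succ_le_pow_mul_add hR0.le
    (sum_nonneg fun _ _ => norm_nonneg _) hRc (hcB ▸ le_pow_mul_add_of_pow_add_add_eq hR0 hSA heq)
  have hn0 : (0 : ℝ) < n := by exact_mod_cast (by omega : 0 < n)
  have hAc : A ≤ ε / n * c := hA.trans <| mul_le_mul_of_nonneg_right
    (one_sub_mul_pow_le (by positivity) (div_le_one_of_le₀ (by linarith) (by positivity))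
      (div_le_div_of_nonneg_left hε.le hn0 (by linarith)) m.succ_ne_zero) hc0
  exact ⟨by linarith [show (1 - ε / n) * c = c - ε / n * c by ring], hRc⟩

theorem stmt4 (n k : ℕ) (hn : 2 ≤ n) (hk1 : 1 ≤ k) (hk2 : k ≤ n - 1)
    (a : ℕ → ℂ) (han : a n = 1) (ha0 : a 0 ≠ 0)
    (ε : ℝ) (hε : 0 < ε)
    (hA : ∑ j ∈ (Finset.range (n + 1)).erase k, ‖a j‖ ≤
      (1 - ε / n) * (ε / (n + ε)) ^ (n - k) *
        (‖a k‖) ^ ((1 : ℝ) / ((n : ℝ) - k)))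
    (R : ℝ) (hR : 1 < R)
    (hroot : R ^ n - ‖a k‖ * R ^ k
      + ∑ j ∈ (Finset.range n).erase k, ‖a j‖ * R ^ j = 0) :
    (1 - ε / n) * (‖a k‖) ^ ((1 : ℝ) / ((n : ℝ) - k)) ≤ R ∧
      R ≤ (‖a k‖) ^ ((1 : ℝ) / ((n : ℝ) - k)) :=
  stmt4_general n k hn hk2 a ε hε hA R hR hroot
end

section
/- Let g(z) = z^n + Σ_{j=0}^{n-1} a_j z^j be monic of degree n, 1 ≤ k ≤ n-1, A_k = Σ_{j≠k} |a_j| (with a_n = 1), and suppose A_k ≤ (1 - ε/n)(ε/(n+ε))^{n-k} |a_k|^{1/(n-k)} for some ε > 0. If z_0 is a root of g with |z_0| > (1 - ε/n)|a_k|^{1/(n-k)}, then there exists a root w of z^{n-k} + a_k = 0 such that |z_0 - w| < (ε/n)|w|. -/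
open Finset

/-!
Write `m = n - k`, `R = |a_k|^{1/m}`, `δ = ε/n` and `A = A_k`. The hypothesis forces
`|z₀| > 1`, so `z₀^k (z₀^m + a_k) = -∑_{j ≠ k} a_j z₀^j` gives `|z₀^m + a_k| ≤ A |z₀|^{m-1}`.
This first bounds `|z₀| ≤ R + A ≤ (1 + δ) R`. Then, as `z₀^m + a_k = ∏ (z₀ - w)` over the
`m` roots of `w^m = -a_k`, the nearest such root satisfies
`|z₀ - w|^m ≤ A ((1 + δ) R)^{m-1} < (δ R)^m = (δ |w|)^m`.
-/

theorem exists_pow_eq_and_norm_sub_pow_le {m : ℕ} (hm : m ≠ 0) (z c : ℂ) :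
    ∃ w : ℂ, w ^ m = c ∧ ‖z - w‖ ^ m ≤ ‖z ^ m - c‖ := by
  have hm0 := Nat.pos_of_ne_zero hm
  obtain ⟨w₀, hw₀⟩ := IsAlgClosed.exists_pow_nat_eq c hm0
  set ζ := Complex.exp (2 * Real.pi * Complex.I / m)
  have hζ : IsPrimitiveRoot ζ m := Complex.isPrimitiveRoot_exp m hm
  have hfactor : z ^ m - c = ∏ i ∈ range m, (z - ζ ^ i * w₀) := by
    simpa [Polynomial.eval_prod] using
      congrArg (Polynomial.eval z) (X_pow_sub_C_eq_prod hζ hm0 hw₀)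
  obtain ⟨i, -, hmin⟩ :=
    (range m).exists_min_image (fun i ↦ ‖z - ζ ^ i * w₀‖) (nonempty_range_iff.mpr hm)
  refine ⟨ζ ^ i * w₀, ?_, ?_⟩
  · rw [mul_pow, ← pow_mul, mul_comm i, pow_mul, hζ.pow_eq_one, one_pow, one_mul, hw₀]
  · rw [hfactor, norm_prod]
    calc ‖z - ζ ^ i * w₀‖ ^ m = ∏ _j ∈ range m, ‖z - ζ ^ i * w₀‖ := by simp
      _ ≤ ∏ j ∈ range m, ‖z - ζ ^ j * w₀‖ := prod_le_prod (fun _ _ ↦ norm_nonneg _) hmin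

theorem norm_pow_add_coeff_le_of_root {n k : ℕ} (hkn : k < n) {a : ℕ → ℂ} {z : ℂ}
    (hz : 1 ≤ ‖z‖) (hroot : z ^ n + ∑ j ∈ range n, a j * z ^ j = 0) :
    ‖z ^ (n - k) + a k‖ ≤ (∑ j ∈ (range n).erase k, ‖a j‖) * ‖z‖ ^ (n - k - 1) := by
  have hsplit : z ^ k * (z ^ (n - k) + a k) = -∑ j ∈ (range n).erase k, a j * z ^ j := by
    rw [← add_sum_erase _ _ (mem_range.mpr hkn)] at hroot
    rw [mul_add, ← pow_add, Nat.add_sub_cancel' hkn.le]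
    linear_combination hroot
  refine le_of_mul_le_mul_left ?_ (pow_pos (zero_lt_one.trans_le hz) k)
  calc ‖z‖ ^ k * ‖z ^ (n - k) + a k‖ = ‖∑ j ∈ (range n).erase k, a j * z ^ j‖ := by
        rw [← norm_pow, ← norm_mul, hsplit, norm_neg]
    _ ≤ ∑ j ∈ (range n).erase k, ‖a j‖ * ‖z‖ ^ (n - 1) := by
        refine (norm_sum_le _ _).trans (sum_le_sum fun j hj ↦ ?_)
        have hj := mem_range.mp (mem_of_mem_erase hj)
        rw [norm_mul, norm_pow]
        gcongr
        omega
    _ = ‖z‖ ^ k * ((∑ j ∈ (range n).erase k, ‖a j‖) * ‖z‖ ^ (n - k - 1)) := by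
        rw [← sum_mul, show n - 1 = k + (n - k - 1) by omega, pow_add]
        ring

theorem norm_le_add_of_norm_pow_succ_add_le {z c : ℂ} {R A : ℝ} {m : ℕ} (hR : 0 ≤ R)
    (hA : 0 ≤ A) (hc : R ^ (m + 1) = ‖c‖) (h : ‖z ^ (m + 1) + c‖ ≤ A * ‖z‖ ^ m) :
    ‖z‖ ≤ R + A := by
  by_contra! hlt
  have hRz : R < ‖z‖ := by linarith
  have hzm : 0 < ‖z‖ ^ m := pow_pos (hR.trans_lt hRz) m
  have hRzm : R ^ m ≤ ‖z‖ ^ m := pow_le_pow_left₀ hR hRz.le m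
  have : (‖z‖ - R) * ‖z‖ ^ m ≤ A * ‖z‖ ^ m := by
    calc (‖z‖ - R) * ‖z‖ ^ m = ‖z‖ ^ (m + 1) - R * ‖z‖ ^ m := by ring
      _ ≤ ‖z‖ ^ (m + 1) - R ^ (m + 1) := by rw [pow_succ' R]; gcongr
      _ ≤ ‖z ^ (m + 1) + c‖ := by simpa [hc] using norm_sub_norm_le (z ^ (m + 1)) (-c)
      _ ≤ A * ‖z‖ ^ m := h
  linarith [le_of_mul_le_mul_right this hzm]

theorem rpow_one_div_sub_pow {x : ℝ} (hx : 0 ≤ x) {n k : ℕ} (hkn : k < n) :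
    (x ^ ((1 : ℝ) / ((n : ℝ) - k))) ^ (n - k) = x := by
  rw [← Nat.cast_sub hkn.le, one_div]
  exact Real.rpow_inv_natCast_pow hx (by omega)

section

variable {A R δ : ℝ} {m : ℕ}

theorem one_le_one_sub_mul_of_add_one_le (hA : 0 ≤ A) (hδ : 0 < δ)
    (h : A + 1 ≤ (1 - δ) * (δ / (1 + δ)) ^ m * R) : 1 ≤ (1 - δ) * R := by
  have hq0 : 0 < (δ / (1 + δ)) ^ m := by positivity
  have hq1 : (δ / (1 + δ)) ^ m ≤ 1 :=
    pow_le_one₀ (by positivity) ((div_le_one (by positivity)).mpr (by linarith))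
  nlinarith

theorem mul_one_add_pow_lt_of_add_one_le (hR : 0 ≤ R) (hδ : 0 < δ)
    (h : A + 1 ≤ (1 - δ) * (δ / (1 + δ)) ^ m * R) : A * (1 + δ) ^ m < δ ^ m * R := by
  have hq : (δ / (1 + δ)) ^ m * (1 + δ) ^ m = δ ^ m := by
    rw [← mul_pow, div_mul_cancel₀ _ (by positivity)]
  have hqR : 0 ≤ (δ / (1 + δ)) ^ m * R := by positivity
  have hA : A < (δ / (1 + δ)) ^ m * R := by nlinarith
  calc A * (1 + δ) ^ m < (δ / (1 + δ)) ^ m * R * (1 + δ) ^ m := by gcongr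
    _ = δ ^ m * R := by rw [mul_right_comm, hq]

theorem lt_mul_of_mul_one_add_pow_succ_lt (hA : 0 ≤ A) (hδ : 0 < δ)
    (h : A * (1 + δ) ^ (m + 1) < δ ^ (m + 1) * R) : A < δ * R := by
  have hR : 0 < R := pos_of_mul_pos_right (lt_of_le_of_lt (by positivity) h) (by positivity)
  have hδm : δ ^ m ≤ (1 + δ) ^ (m + 1) :=
    (pow_le_pow_left₀ hδ.le (by linarith) m).trans (pow_le_pow_right₀ (by linarith) m.le_succ)
  have : A * (1 + δ) ^ (m + 1) < δ * R * (1 + δ) ^ (m + 1) := by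
    calc A * (1 + δ) ^ (m + 1) < δ ^ (m + 1) * R := h
      _ = δ * R * δ ^ m := by ring
      _ ≤ δ * R * (1 + δ) ^ (m + 1) := by gcongr
  exact lt_of_mul_lt_mul_right this (by positivity)

theorem mul_pow_lt_pow_succ_of_mul_one_add_pow_succ_lt (hA : 0 ≤ A) (hδ : 0 < δ)
    (h : A * (1 + δ) ^ (m + 1) < δ ^ (m + 1) * R) :
    A * ((1 + δ) * R) ^ m < (δ * R) ^ (m + 1) := by
  have hR : 0 < R := pos_of_mul_pos_right (lt_of_le_of_lt (by positivity) h) (by positivity)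
  calc A * ((1 + δ) * R) ^ m = A * (1 + δ) ^ m * R ^ m * 1 := by rw [mul_pow]; ring
    _ ≤ A * (1 + δ) ^ m * R ^ m * (1 + δ) := by gcongr; linarith
    _ = A * (1 + δ) ^ (m + 1) * R ^ m := by ring
    _ < δ ^ (m + 1) * R * R ^ m := by gcongr
    _ = (δ * R) ^ (m + 1) := by ring

end

theorem stmt5_general (n k : ℕ) (hn : 2 ≤ n) (hk2 : k ≤ n - 1)
    (a : ℕ → ℂ)
    (ε : ℝ) (hε : 0 < ε)
    (hA : (∑ j ∈ (Finset.range n).erase k, ‖a j‖) + 1 ≤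
      (1 - ε / n) * (ε / (n + ε)) ^ (n - k) *
        ‖a k‖ ^ ((1 : ℝ) / ((n : ℝ) - k)))
    (z₀ : ℂ)
    (hroot : z₀ ^ n + ∑ j ∈ Finset.range n, a j * z₀ ^ j = 0)
    (hz₀ : (1 - ε / n) * ‖a k‖ ^ ((1 : ℝ) / ((n : ℝ) - k)) < ‖z₀‖) :
    ∃ w : ℂ, w ^ (n - k) = -(a k) ∧ ‖z₀ - w‖ < ε / n * ‖w‖ := by
  obtain ⟨m, hm⟩ : ∃ m, n - k = m + 1 := ⟨n - k - 1, by omega⟩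
  set δ := ε / n
  set R := ‖a k‖ ^ ((1 : ℝ) / ((n : ℝ) - k))
  set A := ∑ j ∈ (range n).erase k, ‖a j‖
  have hδ : 0 < δ := by positivity
  have hR : 0 ≤ R := by positivity
  have hA0 : 0 ≤ A := by positivity
  have hRpow : R ^ (m + 1) = ‖a k‖ := hm ▸ rpow_one_div_sub_pow (norm_nonneg _) (by omega)
  have hratio : ε / (n + ε) = δ / (1 + δ) := by
    have hn0 : (n : ℝ) ≠ 0 := by positivity
    simp only [δ]
    field_simp
  rw [hratio, hm] at hA
  have hsmall := mul_one_add_pow_lt_of_add_one_le hR hδ hA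
  have hz₀1 : 1 ≤ ‖z₀‖ := (one_le_one_sub_mul_of_add_one_le hA0 hδ hA).trans hz₀.le
  have hpoly := norm_pow_add_coeff_le_of_root (show k < n by omega) hz₀1 hroot
  rw [hm, Nat.add_sub_cancel] at hpoly
  have hz₀R : ‖z₀‖ ≤ (1 + δ) * R :=
    (norm_le_add_of_norm_pow_succ_add_le hR hA0 hRpow hpoly).trans
      (by linarith [lt_mul_of_mul_one_add_pow_succ_lt hA0 hδ hsmall])
  obtain ⟨w, hw, hzw⟩ := exists_pow_eq_and_norm_sub_pow_le m.succ_ne_zero z₀ (-a k)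
  have hwR : ‖w‖ = R := by
    rw [← pow_left_inj₀ (norm_nonneg w) hR m.succ_ne_zero, ← norm_pow, hw, norm_neg, hRpow]
  refine ⟨w, hm ▸ hw, ?_⟩
  rw [hwR]
  refine lt_of_pow_lt_pow_left₀ (m + 1) (by positivity) ?_
  calc ‖z₀ - w‖ ^ (m + 1) ≤ ‖z₀ ^ (m + 1) + a k‖ := by simpa using hzw
    _ ≤ A * ‖z₀‖ ^ m := hpoly
    _ ≤ A * ((1 + δ) * R) ^ m := by gcongr
    _ < (δ * R) ^ (m + 1) := mul_pow_lt_pow_succ_of_mul_one_add_pow_succ_lt hA0 hδ hsmall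

theorem stmt5 (n k : ℕ) (hn : 2 ≤ n) (hk1 : 1 ≤ k) (hk2 : k ≤ n - 1)
    (a : ℕ → ℂ) (ha0 : a 0 ≠ 0)
    (ε : ℝ) (hε : 0 < ε)
    (hA : (∑ j ∈ (Finset.range n).erase k, ‖a j‖) + 1 ≤
      (1 - ε / n) * (ε / (n + ε)) ^ (n - k) *
        ‖a k‖ ^ ((1 : ℝ) / ((n : ℝ) - k)))
    (z₀ : ℂ)
    (hroot : z₀ ^ n + ∑ j ∈ Finset.range n, a j * z₀ ^ j = 0)
    (hz₀ : (1 - ε / n) * ‖a k‖ ^ ((1 : ℝ) / ((n : ℝ) - k)) < ‖z₀‖) :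
    ∃ w : ℂ, w ^ (n - k) = -(a k) ∧ ‖z₀ - w‖ < ε / n * ‖w‖ :=
  stmt5_general n k hn hk2 a ε hε hA z₀ hroot hz₀
end

section
/- Let ξ_0, …, ξ_n be complex numbers, not all zero, with ξ_0 ≠ 0 and ξ_n ≠ 0, and let τ be an index maximizing |ξ_j|. Fix δ > 0 and suppose |ξ_τ| > e^δ · Σ_{j≠τ} |ξ_j|. Then the polynomial G(z) = Σ_{j=0}^n ξ_j z^j has no roots z with e^{-δ/n} ≤ |z| ≤ e^{δ/n}. -/
open Finset

/- On the annulus `e^{-δ/n} ≤ |z| ≤ e^{δ/n}` every monomial `|z|^j`, `j ≤ n`, is within a factor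
`e^δ` of `|z|^τ`, so the hypothesis makes `ξ_τ z^τ` strictly larger in norm than the sum of all
the other terms of `G(z)`, which therefore cannot cancel it. -/

theorem ne_zero_of_sum_erase_norm_lt {ι E : Type*} [DecidableEq ι] [SeminormedAddCommGroup E]
    {s : Finset ι} {f : ι → E} {i : ι} (hi : i ∈ s)
    (hlt : ∑ j ∈ s.erase i, ‖f j‖ < ‖f i‖) : ∑ j ∈ s, f j ≠ 0 := by
  intro hzero
  have hfi : f i = -∑ j ∈ s.erase i, f j := by
    rw [eq_neg_iff_add_eq_zero, add_comm, sum_erase_add s f hi, hzero]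
  refine hlt.not_ge ?_
  rw [hfi, norm_neg]
  exact norm_sum_le _ _

theorem Real.abs_log_le_of_exp_neg_le_of_le_exp {r a : ℝ} (h₁ : Real.exp (-a) ≤ r)
    (h₂ : r ≤ Real.exp a) : |Real.log r| ≤ a := by
  have hr : 0 < r := (Real.exp_pos _).trans_le h₁
  rw [abs_le]
  exact ⟨(Real.le_log_iff_exp_le hr).2 h₁, (Real.log_le_iff_le_exp hr).2 h₂⟩

theorem pow_le_exp_mul_pow {r δ : ℝ} {n j τ : ℕ} (hn : 0 < n) (hr : 0 < r)
    (hlog : |Real.log r| ≤ δ / n) (hj : j ≤ n) (hτ : τ ≤ n) :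
    r ^ j ≤ Real.exp δ * r ^ τ := by
  have hdist : |(j : ℝ) - τ| ≤ n := by
    rw [abs_sub_le_iff]
    constructor <;> linarith [(Nat.cast_le (α := ℝ)).2 hj, (Nat.cast_le (α := ℝ)).2 hτ,
      (Nat.cast_nonneg (α := ℝ) j), (Nat.cast_nonneg (α := ℝ) τ)]
  have hexponent : ((j : ℝ) - τ) * Real.log r ≤ δ :=
    calc ((j : ℝ) - τ) * Real.log r ≤ |(j : ℝ) - τ| * |Real.log r| := by
          rw [← abs_mul]; exact le_abs_self _
      _ ≤ n * (δ / n) := mul_le_mul hdist hlog (abs_nonneg _) (Nat.cast_nonneg _)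
      _ = δ := by field_simp
  rw [← Real.exp_log hr, ← Real.exp_nat_mul, ← Real.exp_nat_mul, ← Real.exp_add,
    Real.exp_le_exp]
  linarith

theorem stmt12_general (n : ℕ) (hn : 1 ≤ n) (ξ : ℕ → ℂ)
    (τ : ℕ) (hτ : τ ≤ n)
    (δ : ℝ)
    (hbig : Real.exp δ * ∑ j ∈ (Finset.range (n + 1)).erase τ, ‖ξ j‖ <
      ‖ξ τ‖) :
    ∀ z : ℂ, Real.exp (-δ / n) ≤ ‖z‖ → ‖z‖ ≤ Real.exp (δ / n) →
      ∑ j ∈ Finset.range (n + 1), ξ j * z ^ j ≠ 0 := by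
  intro z hz₁ hz₂
  have hr : 0 < ‖z‖ := (Real.exp_pos _).trans_le hz₁
  have hlog : |Real.log ‖z‖| ≤ δ / n :=
    Real.abs_log_le_of_exp_neg_le_of_le_exp (by rwa [← neg_div]) hz₂
  refine ne_zero_of_sum_erase_norm_lt (mem_range_succ_iff.2 hτ) ?_
  calc ∑ j ∈ (range (n + 1)).erase τ, ‖ξ j * z ^ j‖
      ≤ ∑ j ∈ (range (n + 1)).erase τ, ‖ξ j‖ * (Real.exp δ * ‖z‖ ^ τ) := by
        refine sum_le_sum fun j hj => ?_
        rw [norm_mul, norm_pow]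
        exact mul_le_mul_of_nonneg_left (pow_le_exp_mul_pow hn hr hlog
          (mem_range_succ_iff.1 (mem_of_mem_erase hj)) hτ) (norm_nonneg _)
    _ = (Real.exp δ * ∑ j ∈ (range (n + 1)).erase τ, ‖ξ j‖) * ‖z‖ ^ τ := by
        rw [← sum_mul]; ring
    _ < ‖ξ τ‖ * ‖z‖ ^ τ := mul_lt_mul_of_pos_right hbig (pow_pos hr _)
    _ = ‖ξ τ * z ^ τ‖ := by rw [norm_mul, norm_pow]

theorem stmt12 (n : ℕ) (hn : 1 ≤ n) (ξ : ℕ → ℂ) (hξ0 : ξ 0 ≠ 0) (hξn : ξ n ≠ 0)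
    (τ : ℕ) (hτ : τ ≤ n) (hmax : ∀ j ≤ n, ‖ξ j‖ ≤ ‖ξ τ‖)
    (δ : ℝ) (hδ : 0 < δ)
    (hbig : Real.exp δ * ∑ j ∈ (Finset.range (n + 1)).erase τ, ‖ξ j‖ <
      ‖ξ τ‖) :
    ∀ z : ℂ, Real.exp (-δ / n) ≤ ‖z‖ → ‖z‖ ≤ Real.exp (δ / n) →
      ∑ j ∈ Finset.range (n + 1), ξ j * z ^ j ≠ 0 :=
  stmt12_general n hn ξ τ hτ δ hbig
end

section
/- Let (η_j)_{j≥0} be i.i.d. nonnegative real random variables with E[η_0] = ∞, and set S_n = Σ_{j=0}^n η_j and M_n = max_{0≤j≤n} η_j. Then (S_n - M_n)/n → ∞ almost surely as n → ∞. -/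
/-!
Truncate at a level `c`: dropping the largest term costs at most `c` from the sum of the
truncations `min η_j c`, so `(S_n - M_n)/n` is at least the average of the truncations minus
`c/n`. By the strong law the latter tends to `E[min η_0 c]`, which is unbounded in `c` by monotone
convergence since `E[η_0] = ∞`.
-/

open MeasureTheory ProbabilityTheory Filter Finset Topology ENNReal

lemma sum_min_sub_le_sum_sub_sup' {ι : Type*} (s : Finset ι) (hs : s.Nonempty) (f : ι → ℝ)
    (c : ℝ) : ∑ j ∈ s, min (f j) c - c ≤ ∑ j ∈ s, f j - s.sup' hs f := by
  obtain ⟨m, hm, hmax⟩ := s.exists_mem_eq_sup' hs f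
  have hgap : f m - min (f m) c ≤ ∑ j ∈ s, (f j - min (f j) c) :=
    single_le_sum (f := fun j => f j - min (f j) c) (fun j _ => sub_nonneg.2 (min_le_left _ _)) hm
  rw [sum_sub_distrib] at hgap
  linarith [min_le_right (f m) c]

section Truncation

variable {Ω : Type*} [MeasurableSpace Ω] {μ : Measure Ω} [IsFiniteMeasure μ]

lemma integrable_min_of_nonneg {X : Ω → ℝ} (hX : AEStronglyMeasurable X μ) (hnn : 0 ≤ᵐ[μ] X)
    (c : ℝ) : Integrable (fun ω => min (X ω) c) μ := by
  refine (integrable_const |c|).mono' (hX.inf aestronglyMeasurable_const) ?_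
  filter_upwards [hnn] with ω hω
  rw [Real.norm_eq_abs, abs_le]
  have hω : 0 ≤ X ω := hω
  exact ⟨le_min (by linarith [abs_nonneg c]) (neg_abs_le c),
    (min_le_right _ _).trans (le_abs_self c)⟩

lemma exists_lt_integral_min_natCast {X : Ω → ℝ} (hX : AEMeasurable X μ) (hnn : 0 ≤ᵐ[μ] X)
    (hmean : ∫⁻ ω, ENNReal.ofReal (X ω) ∂μ = ⊤) (b : ℝ) :
    ∃ c : ℕ, b < ∫ ω, min (X ω) c ∂μ := by
  set T : ℕ → Ω → ℝ≥0∞ := fun c ω => min (ENNReal.ofReal (X ω)) c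
  have hsup : ⨆ c : ℕ, ∫⁻ ω, T c ω ∂μ = ⊤ := by
    rw [← lintegral_iSup' (fun c => hX.ennreal_ofReal.min aemeasurable_const)
      (ae_of_all _ fun ω c d hcd => min_le_min le_rfl (by exact_mod_cast hcd)), ← hmean]
    congr 1 with ω
    simp only [← inf_iSup_eq, ENNReal.iSup_natCast, inf_top_eq]
  obtain ⟨c, hc⟩ : ∃ c : ℕ, ENNReal.ofReal b < ∫⁻ ω, T c ω ∂μ :=
    lt_iSup_iff.1 (hsup ▸ ofReal_lt_top)
  refine ⟨c, ?_⟩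
  have hfin : ∫⁻ ω, T c ω ∂μ ≠ ⊤ :=
    ne_top_of_le_ne_top (by simp [lintegral_const, ENNReal.mul_eq_top, measure_ne_top])
      (lintegral_mono fun ω => min_le_right (ENNReal.ofReal (X ω)) (c : ℝ≥0∞))
  have heq : ∫ ω, min (X ω) c ∂μ = (∫⁻ ω, T c ω ∂μ).toReal := by
    rw [integral_eq_lintegral_of_nonneg_ae (f := fun ω => min (X ω) c)
      (by filter_upwards [hnn] with ω hω using le_min hω c.cast_nonneg)
      (hX.aestronglyMeasurable.inf aestronglyMeasurable_const)]
    congr 1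
    refine lintegral_congr fun ω => ?_
    simp only [T]
    rw [← ENNReal.ofReal_natCast c]
    exact Monotone.map_min fun _ _ h => ENNReal.ofReal_le_ofReal h
  rw [heq]
  rcases le_or_gt 0 b with hb | hb
  · exact (ENNReal.ofReal_lt_iff_lt_toReal hb hfin).1 hc
  · exact hb.trans_le ENNReal.toReal_nonneg

lemma ae_tendsto_average_min_natCast {η : ℕ → Ω → ℝ} (hmeas : ∀ i, Measurable (η i))
    (hnn : ∀ i ω, 0 ≤ η i ω) (hindep : Pairwise fun i j => η i ⟂ᵢ[μ] η j)
    (hident : ∀ i, IdentDistrib (η i) (η 0) μ μ) :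
    ∀ᵐ ω ∂μ, ∀ c : ℕ, Tendsto (fun n : ℕ => (∑ i ∈ range n, min (η i ω) c) / n) atTop
      (𝓝 (∫ ω, min (η 0 ω) c ∂μ)) := by
  refine ae_all_iff.2 fun c => strong_law_ae_real (fun i ω => min (η i ω) c)
    (integrable_min_of_nonneg (hmeas 0).aestronglyMeasurable (ae_of_all _ (hnn 0)) c)
    (fun i j hij => ?_) fun i => (hident i).comp (measurable_id.min measurable_const)
  exact (hindep hij).comp (measurable_id.min measurable_const) (measurable_id.min measurable_const)

end Truncation

theorem stmt18 {Ω : Type*} [MeasurableSpace Ω] (μ : Measure Ω) [IsProbabilityMeasure μ]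
    (η : ℕ → Ω → ℝ) (hmeas : ∀ i, Measurable (η i))
    (hnn : ∀ i ω, 0 ≤ η i ω)
    (hindep : iIndepFun η μ)
    (hident : ∀ i, IdentDistrib (η i) (η 0) μ μ)
    (hmean : ∫⁻ ω, ENNReal.ofReal (η 0 ω) ∂μ = ⊤) :
    ∀ᵐ ω ∂μ, Tendsto
      (fun n : ℕ =>
        ((∑ j ∈ Finset.range (n + 1), η j ω) -
          (Finset.range (n + 1)).sup' (Finset.nonempty_range_iff.mpr n.succ_ne_zero)
            (fun j => η j ω)) / n)
      atTop atTop := by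
  filter_upwards [ae_tendsto_average_min_natCast hmeas hnn (fun i j hij => hindep.indepFun hij)
    hident] with ω hω
  refine tendsto_atTop.2 fun b => ?_
  obtain ⟨c, hc⟩ := exists_lt_integral_min_natCast (hmeas 0).aemeasurable
    (ae_of_all _ (hnn 0)) hmean b
  have hlim := (hω c).sub (tendsto_const_div_atTop_nhds_zero_nat (c : ℝ))
  rw [sub_zero] at hlim
  filter_upwards [hlim.eventually (eventually_gt_nhds hc)] with n hn
  refine hn.le.trans ?_
  rw [div_sub_div_same]
  gcongr ?_ / _
  calc ∑ i ∈ range n, min (η i ω) c - c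
      ≤ ∑ i ∈ range (n + 1), min (η i ω) c - c :=
        sub_le_sub_right (sum_le_sum_of_subset_of_nonneg (range_subset_range.2 n.le_succ)
          fun i _ _ => le_min (hnn i ω) c.cast_nonneg) _
    _ ≤ _ := sum_min_sub_le_sum_sub_sup' _ _ _ _
end
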